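/- arXiv:2011.14495 — 5 statements merged into one kernel-verified Lean document; each statement's English description precedes it below -/
import Mathlib

section
/- Let Ω be a finite set, f a probability distribution on Ω, X : Ω → ℝ, and α ∈ [0,1). Then max_{b∈ℝ} ( b − (1/(1−α)) · Σ_ω f_ω · max{b − X(ω), 0} ) = min { Σ_ω ξ_ω X(ω) : ξ ∈ Δ^Ω, ξ_ω ≤ f_ω/(1−α) for all ω }, i.e., the Rockafellar–Uryasev CVaR formula equals its dual robust representation as a minimum over a box-constrained set of probability distributions. -/
/-!
Write `w = f / (1 - α)`, so that `∑ w ≥ 1`. For any `ξ` with `∑ ξ = 1` and any `b`,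
`∑ ξ X = b - ∑ ξ (b - X)`, and `0 ≤ ξ ≤ w` gives `ξ (b - X) ≤ w (b - X)⁺` pointwise: this is weak
duality. Equality holds pointwise when `ξ = w` below `b` and `ξ = 0` above `b`. Such a pair exists:
take `b` a quantile of `X` at which the `w`-mass strictly below `b` is at most `1` and the mass up to
`b` is at least `1`, fill `ξ = w` below `b` and spread the missing mass over the atom `{X = b}`.
-/

open Finset

section

variable {Ω : Type*} [Fintype Ω]

theorem sum_mul_eq_sub_sum_mul_sub {ξ : Ω → ℝ} (hξ : ∑ ω, ξ ω = 1) (X : Ω → ℝ) (b : ℝ) :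
    ∑ ω, ξ ω * X ω = b - ∑ ω, ξ ω * (b - X ω) := by
  simp only [mul_sub, sum_sub_distrib, ← sum_mul, hξ, one_mul, sub_sub_cancel]

theorem sub_sum_mul_max_le_sum_mul {w ξ : Ω → ℝ} (hξ0 : ∀ ω, 0 ≤ ξ ω) (hξw : ∀ ω, ξ ω ≤ w ω)
    (hξ1 : ∑ ω, ξ ω = 1) (X : Ω → ℝ) (b : ℝ) :
    b - ∑ ω, w ω * max (b - X ω) 0 ≤ ∑ ω, ξ ω * X ω := by
  rw [sum_mul_eq_sub_sum_mul_sub hξ1 X b]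
  refine sub_le_sub_left (sum_le_sum fun ω _ => ?_) b
  calc ξ ω * (b - X ω) ≤ ξ ω * max (b - X ω) 0 :=
        mul_le_mul_of_nonneg_left (le_max_left _ _) (hξ0 ω)
    _ ≤ w ω * max (b - X ω) 0 := mul_le_mul_of_nonneg_right (hξw ω) (le_max_right _ _)

theorem sub_sum_mul_max_eq_sum_mul {w ξ X : Ω → ℝ} {b : ℝ} (hξ1 : ∑ ω, ξ ω = 1)
    (hlt : ∀ ω, X ω < b → ξ ω = w ω) (hgt : ∀ ω, b < X ω → ξ ω = 0) :
    b - ∑ ω, w ω * max (b - X ω) 0 = ∑ ω, ξ ω * X ω := by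
  rw [sum_mul_eq_sub_sum_mul_sub hξ1 X b]
  congr 1
  refine sum_congr rfl fun ω _ => ?_
  rcases lt_trichotomy (X ω) b with h | h | h
  · rw [hlt ω h, max_eq_left (by linarith)]
  · simp [h]
  · rw [hgt ω h, max_eq_right (by linarith)]
    ring

theorem exists_weighted_quantile [Nonempty Ω] {w : Ω → ℝ} (hw : ∀ ω, 0 ≤ w ω) (X : Ω → ℝ)
    {m : ℝ} (hm0 : 0 ≤ m) (hm : m ≤ ∑ ω, w ω) :
    ∃ b, ∑ ω with X ω < b, w ω ≤ m ∧ m ≤ ∑ ω with X ω ≤ b, w ω := by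
  set T := univ.filter fun ω' => m ≤ ∑ ω with X ω ≤ X ω', w ω
  have hT : T.Nonempty := by
    obtain ⟨ωmax, -, hmax⟩ := exists_max_image univ X univ_nonempty
    refine ⟨ωmax, mem_filter.mpr ⟨mem_univ _, ?_⟩⟩
    rwa [filter_true_of_mem fun ω _ => hmax ω (mem_univ ω)]
  obtain ⟨ω₀, hω₀T, hω₀⟩ := exists_min_image T X hT
  refine ⟨X ω₀, ?_, (mem_filter.mp hω₀T).2⟩
  by_cases hbelow : (univ.filter fun ω => X ω < X ω₀).Nonempty
  · obtain ⟨ω₁, hω₁, hmax₁⟩ := exists_max_image _ X hbelow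
    have hω₁T : ω₁ ∉ T := fun h => (hω₀ ω₁ h).not_gt (mem_filter.mp hω₁).2
    calc ∑ ω with X ω < X ω₀, w ω ≤ ∑ ω with X ω ≤ X ω₁, w ω :=
          sum_le_sum_of_subset_of_nonneg
          (fun ω hω => by simpa using hmax₁ ω hω) fun ω _ _ => hw ω
      _ ≤ m := (by simpa [T] using hω₁T : _ < m).le
  · rw [not_nonempty_iff_eq_empty.mp hbelow, sum_empty]
    exact hm0

theorem exists_fill_up_to_quantile {w : Ω → ℝ} (hw : ∀ ω, 0 ≤ w ω) (X : Ω → ℝ) {m b : ℝ}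
    (hlt : ∑ ω with X ω < b, w ω ≤ m) (hle : m ≤ ∑ ω with X ω ≤ b, w ω) :
    ∃ ξ : Ω → ℝ, (∀ ω, 0 ≤ ξ ω) ∧ (∀ ω, ξ ω ≤ w ω) ∧ ∑ ω, ξ ω = m ∧
      (∀ ω, X ω < b → ξ ω = w ω) ∧ (∀ ω, b < X ω → ξ ω = 0) := by
  set G := ∑ ω with X ω < b, w ω
  set P := ∑ ω with X ω = b, w ω
  have hGP : ∑ ω with X ω ≤ b, w ω = G + P := by
    simp only [G, P, sum_filter, ← sum_add_distrib]
    refine sum_congr rfl fun ω _ => ?_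
    rcases lt_trichotomy (X ω) b with h | rfl | h
    · simp [h, h.le, h.ne]
    · simp
    · simp [h.not_gt, h.not_ge, h.ne']
  have hP : 0 ≤ P := sum_nonneg fun ω _ => hw ω
  set θ := (m - G) / P
  have hθ0 : 0 ≤ θ := div_nonneg (by linarith) hP
  have hθ1 : θ ≤ 1 := div_le_one_of_le₀ (by linarith) hP
  -- if the atom `{X = b}` is null then `m = G`, and `θ = 0` by the division convention
  have hθP : θ * P = m - G := by
    rcases hP.eq_or_lt with h | h
    · simp only [θ, ← h, mul_zero]; linarith
    · exact div_mul_cancel₀ _ h.ne'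
  refine ⟨fun ω => if X ω < b then w ω else if X ω = b then θ * w ω else 0,
    fun ω => ?_, fun ω => ?_, ?_, fun ω h => if_pos h, fun ω h => ?_⟩
  · dsimp only
    split_ifs
    exacts [hw ω, mul_nonneg hθ0 (hw ω), le_rfl]
  · dsimp only
    split_ifs
    exacts [le_rfl, mul_le_of_le_one_left (hw ω) hθ1, hw ω]
  · have hsplit : ∀ ω, (if X ω < b then w ω else if X ω = b then θ * w ω else 0) =
        (if X ω < b then w ω else 0) + θ * (if X ω = b then w ω else 0) := fun ω => by
      rcases lt_trichotomy (X ω) b with h | rfl | h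
      · simp [h, h.ne]
      · simp
      · simp [h.not_gt, h.ne']
    simp only [hsplit, sum_add_distrib, ← mul_sum, ← sum_filter, hθP, G, P]
    ring
  · simp [h.not_gt, h.ne']

end

/-- Rockafellar–Uryasev CVaR formula equals its dual robust representation:
`max_b ( b − E_f[max(b−X,0)]/(1−α) ) = min { E_ξ[X] : ξ ∈ Δ^Ω, ξ ≤ f/(1−α) }`. -/
theorem stmt_3 {Ω : Type*} [Fintype Ω] [Nonempty Ω] (f : Ω → ℝ) (X : Ω → ℝ)
    (hf0 : ∀ ω, 0 ≤ f ω) (hf1 : ∑ ω, f ω = 1) (α : ℝ) (hα0 : 0 ≤ α) (hα1 : α < 1) :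
    sSup {v : ℝ | ∃ b : ℝ, v = b - (1 / (1 - α)) * ∑ ω, f ω * max (b - X ω) 0} =
    sInf {v : ℝ | ∃ ξ : Ω → ℝ, (∀ ω, 0 ≤ ξ ω) ∧ (∑ ω, ξ ω = 1) ∧
      (∀ ω, ξ ω ≤ f ω / (1 - α)) ∧ v = ∑ ω, ξ ω * X ω} := by
  have hα : 0 < 1 - α := by linarith
  have hw : ∀ ω, 0 ≤ f ω / (1 - α) := fun ω => div_nonneg (hf0 ω) hα.le
  have hw1 : 1 ≤ ∑ ω, f ω / (1 - α) := by
    rw [← sum_div, hf1, le_div_iff₀ hα]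
    linarith
  have hprimal : ∀ b, b - (1 / (1 - α)) * ∑ ω, f ω * max (b - X ω) 0 =
      b - ∑ ω, f ω / (1 - α) * max (b - X ω) 0 := fun b => by
    simp only [mul_sum, div_eq_inv_mul, one_mul, mul_assoc]
  simp only [hprimal]
  obtain ⟨b, hGb, hbF⟩ := exists_weighted_quantile hw X zero_le_one hw1
  obtain ⟨ξ, hξ0, hξw, hξ1, hlt, hgt⟩ := exists_fill_up_to_quantile hw X hGb hbF
  have hval := sub_sum_mul_max_eq_sum_mul hξ1 hlt hgt
  rw [IsGreatest.csSup_eq (a := ∑ ω, ξ ω * X ω), IsLeast.csInf_eq (a := ∑ ω, ξ ω * X ω)]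
  · refine ⟨⟨ξ, hξ0, hξ1, hξw, rfl⟩, ?_⟩
    rintro _ ⟨ξ', hξ'0, hξ'1, hξ'w, rfl⟩
    exact hval ▸ sub_sum_mul_max_le_sum_mul hξ'0 hξ'w hξ'1 X b
  · refine ⟨⟨b, hval.symm⟩, ?_⟩
    rintro _ ⟨b', rfl⟩
    exact sub_sum_mul_max_le_sum_mul hξ0 hξw hξ1 X b'
end

section
/- Let Ω be a finite set, f ∈ Δ^Ω a probability distribution with full support, α ∈ [0,1), λ ∈ [0,1], and define Ξ = { ξ ∈ Δ^Ω : (1−λ)·f_ω ≤ ξ_ω ≤ ((1−α+λα)/(1−α))·f_ω for all ω }. Then for any X : Ω → ℝ, (1−λ)·E_f[X] + λ·CVaR^α_f[X] = min_{ξ∈Ξ} Σ_ω ξ_ω X(ω), where CVaR^α_f[X] = min{ Σ_ω ξ_ω X(ω) : ξ ∈ Δ^Ω, ξ ≤ f/(1−α) }. -/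
/-- The soft-robust combination of mean and CVaR equals a worst-case expectation
over the box-constrained set `Ξ`:
`(1−λ)·E_f[X] + λ·CVaR^α_f[X] = min_{ξ∈Ξ} E_ξ[X]` where
`Ξ = { ξ ∈ Δ^Ω : (1−λ)f_ω ≤ ξ_ω ≤ ((1−α+λα)/(1−α))f_ω }`. -/
theorem stmt_6 {Ω : Type*} [Fintype Ω] [Nonempty Ω] (f : Ω → ℝ) (X : Ω → ℝ)
    (hf0 : ∀ ω, 0 < f ω) (hf1 : ∑ ω, f ω = 1)
    (α lam : ℝ) (hα0 : 0 ≤ α) (hα1 : α < 1) (hl0 : 0 ≤ lam) (hl1 : lam ≤ 1) :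
    (1 - lam) * (∑ ω, f ω * X ω)
      + lam * sInf {v : ℝ | ∃ ξ : Ω → ℝ, (∀ ω, 0 ≤ ξ ω) ∧ (∑ ω, ξ ω = 1) ∧
          (∀ ω, ξ ω ≤ f ω / (1 - α)) ∧ v = ∑ ω, ξ ω * X ω}
    = sInf {v : ℝ | ∃ ξ : Ω → ℝ, (∀ ω, 0 ≤ ξ ω) ∧ (∑ ω, ξ ω = 1) ∧
        (∀ ω, (1 - lam) * f ω ≤ ξ ω ∧ ξ ω ≤ ((1 - α + lam * α) / (1 - α)) * f ω) ∧
        v = ∑ ω, ξ ω * X ω} := by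
  have hα : (0:ℝ) < 1 - α := by linarith
  set E : ℝ := ∑ ω, f ω * X ω with hE
  set S : Set ℝ := {v : ℝ | ∃ ξ : Ω → ℝ, (∀ ω, 0 ≤ ξ ω) ∧ (∑ ω, ξ ω = 1) ∧
          (∀ ω, ξ ω ≤ f ω / (1 - α)) ∧ v = ∑ ω, ξ ω * X ω} with hS
  set T : Set ℝ := {v : ℝ | ∃ ξ : Ω → ℝ, (∀ ω, 0 ≤ ξ ω) ∧ (∑ ω, ξ ω = 1) ∧
        (∀ ω, (1 - lam) * f ω ≤ ξ ω ∧ ξ ω ≤ ((1 - α + lam * α) / (1 - α)) * f ω) ∧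
        v = ∑ ω, ξ ω * X ω} with hT
  have hSne : S.Nonempty := by
    refine ⟨E, f, fun ω => (hf0 ω).le, hf1, fun ω => ?_, rfl⟩
    rw [le_div_iff₀ hα]
    nlinarith [(hf0 ω).le]
  have hSbdd : BddBelow S := by
    refine ⟨∑ ω, -(f ω * |X ω|) / (1 - α), ?_⟩
    rintro v ⟨ξ, hpos, hsum, hub, rfl⟩
    apply Finset.sum_le_sum
    intro ω _
    have h1 : -(f ω * |X ω|) / (1 - α) ≤ -(ξ ω * |X ω|) := by
      rw [div_le_iff₀ hα]
      have := hub ω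
      rw [le_div_iff₀ hα] at this
      nlinarith [abs_nonneg (X ω), hpos ω]
    calc -(f ω * |X ω|) / (1 - α) ≤ -(ξ ω * |X ω|) := h1
      _ ≤ ξ ω * X ω := by nlinarith [neg_abs_le (X ω), hpos ω]
  have hTS : T = (fun v => (1 - lam) * E + lam * v) '' S := by
    ext v
    constructor
    · rintro ⟨ξ', hpos', hsum', hbd', rfl⟩
      rcases eq_or_lt_of_le hl0 with h0 | h0
      · -- lam = 0 : ξ' = f forced
        have hξf : ∀ ω, ξ' ω = f ω := by
          intro ω
          have h1 := (hbd' ω).1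
          have h2 := (hbd' ω).2
          rw [← h0] at h1 h2
          have : ((1 - α + 0 * α) / (1 - α)) = 1 := by
            field_simp
            ring
          rw [this] at h2
          linarith [h1, h2]
        obtain ⟨u, hu⟩ := hSne
        refine ⟨u, hu, ?_⟩
        rw [← h0]
        simp only [sub_zero, one_mul, zero_mul, add_zero]
        rw [hE]
        exact (Finset.sum_congr rfl (fun ω _ => by rw [hξf ω])).symm
      · -- lam > 0
        refine ⟨∑ ω, ((ξ' ω - (1 - lam) * f ω) / lam) * X ω,
          ⟨fun ω => (ξ' ω - (1 - lam) * f ω) / lam, ?_, ?_, ?_, rfl⟩, ?_⟩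
        · intro ω
          have := (hbd' ω).1
          exact div_nonneg (by linarith) h0.le
        · rw [← Finset.sum_div]
          rw [Finset.sum_sub_distrib, hsum', ← Finset.mul_sum, hf1]
          field_simp
          ring
        · intro ω
          have h2 := (hbd' ω).2
          rw [div_le_div_iff₀ h0 hα]
          rw [div_mul_eq_mul_div, le_div_iff₀ hα] at h2
          nlinarith [(hf0 ω).le]
        · dsimp only
          rw [hE, Finset.mul_sum, Finset.mul_sum, ← Finset.sum_add_distrib]
          apply Finset.sum_congr rfl
          intro ω _
          field_simp
          ring
    · rintro ⟨u, ⟨ξ, hpos, hsum, hub, rfl⟩, rfl⟩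
      refine ⟨fun ω => (1 - lam) * f ω + lam * ξ ω, fun ω => ?_, ?_, fun ω => ⟨?_, ?_⟩, ?_⟩
      · dsimp only
        nlinarith [(hf0 ω).le, hpos ω]
      · rw [Finset.sum_add_distrib, ← Finset.mul_sum, ← Finset.mul_sum, hf1, hsum]
        ring
      · dsimp only
        nlinarith [hpos ω]
      · have := hub ω
        rw [le_div_iff₀ hα] at this
        dsimp only
        rw [div_mul_eq_mul_div, le_div_iff₀ hα]
        nlinarith [(hf0 ω).le]
      · dsimp only
        rw [hE, Finset.mul_sum, Finset.mul_sum, ← Finset.sum_add_distrib]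
        apply Finset.sum_congr rfl
        intro ω _
        ring
  rw [hTS]
  have hmono : Monotone (fun v : ℝ => (1 - lam) * E + lam * v) := by
    intro a b hab
    simp only
    nlinarith
  have hcont : ContinuousAt (fun v : ℝ => (1 - lam) * E + lam * v) (sInf S) := by
    fun_prop
  exact hmono.map_csInf_of_continuousAt hcont hSne hSbdd
end

section
/- The set Ξ = { ξ ∈ Δ^Ω : (1−λ)·f ≤ ξ ≤ ((1−α+λα)/(1−α))·f } equals the Minkowski combination λ·Q_CVaR + (1−λ)·{f}, where Q_CVaR = { ξ ∈ Δ^Ω : ξ ≤ f/(1−α) }, for any λ ∈ (0,1], α ∈ [0,1), and probability vector f on a finite set Ω. -/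
/-! The affine map `q ↦ λ q + (1 - λ) f` is a bijection (as `λ ≠ 0`), and pointwise it carries
the constraints `0 ≤ q` and `q ≤ f / (1 - α)` exactly onto the two bounds defining `Ξ`, since
`((1 - α + λα) / (1 - α)) f = λ (f / (1 - α)) + (1 - λ) f`; the normalisation `∑ q = 1` corresponds
to `∑ ξ = 1` because `∑ f = 1`. -/

open Finset

section Mixture

variable {lam : ℝ}

theorem le_mix_iff (hl : 0 < lam) (q f : ℝ) :
    (1 - lam) * f ≤ lam * q + (1 - lam) * f ↔ 0 ≤ q := by
  rw [le_add_iff_nonneg_left, mul_nonneg_iff_of_pos_left hl]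

theorem soft_robust_coeff_mul_eq {α : ℝ} (hα : α < 1) (f : ℝ) :
    (1 - α + lam * α) / (1 - α) * f = lam * (f / (1 - α)) + (1 - lam) * f := by
  field_simp [(sub_pos.2 hα).ne']
  ring

theorem mix_le_soft_robust_iff {α : ℝ} (hl : 0 < lam) (hα : α < 1) (q f : ℝ) :
    lam * q + (1 - lam) * f ≤ (1 - α + lam * α) / (1 - α) * f ↔ q ≤ f / (1 - α) := by
  rw [soft_robust_coeff_mul_eq hα, add_le_add_iff_right, mul_le_mul_iff_right₀ hl]

theorem sum_mix_eq_one_iff {ι : Type*} {s : Finset ι} {q f : ι → ℝ} (hl : lam ≠ 0)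
    (hf : ∑ i ∈ s, f i = 1) :
    ∑ i ∈ s, (lam * q i + (1 - lam) * f i) = 1 ↔ ∑ i ∈ s, q i = 1 := by
  rw [sum_add_distrib, ← mul_sum, ← mul_sum, hf]
  constructor
  · intro h
    have : lam * (∑ i ∈ s, q i - 1) = 0 := by linarith
    simpa [hl, sub_eq_zero] using this
  · intro h
    rw [h]
    ring

end Mixture

theorem stmt_7_general {Ω : Type*} [Fintype Ω] (f : Ω → ℝ)
    (hf0 : ∀ ω, 0 ≤ f ω) (hf1 : ∑ ω, f ω = 1)
    (α lam : ℝ) (hα1 : α < 1) (hl0 : 0 < lam) (hl1 : lam ≤ 1) :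
    {ξ : Ω → ℝ | (∀ ω, 0 ≤ ξ ω) ∧ (∑ ω, ξ ω = 1) ∧
        (∀ ω, (1 - lam) * f ω ≤ ξ ω ∧ ξ ω ≤ ((1 - α + lam * α) / (1 - α)) * f ω)}
    = {ξ : Ω → ℝ | ∃ q : Ω → ℝ, (∀ ω, 0 ≤ q ω) ∧ (∑ ω, q ω = 1) ∧
        (∀ ω, q ω ≤ f ω / (1 - α)) ∧ ξ = fun ω => lam * q ω + (1 - lam) * f ω} := by
  ext ξ
  simp only [Set.mem_ofPred_eq]
  constructor
  · rintro ⟨-, hsum, hbounds⟩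
    set q : Ω → ℝ := fun ω => (ξ ω - (1 - lam) * f ω) / lam
    have hξ : ξ = fun ω => lam * q ω + (1 - lam) * f ω := by
      funext ω
      simp only [q]
      field_simp
      ring
    rw [hξ] at hsum hbounds
    exact ⟨q, fun ω => (le_mix_iff hl0 _ _).1 (hbounds ω).1,
      (sum_mix_eq_one_iff hl0.ne' hf1).1 hsum,
      fun ω => (mix_le_soft_robust_iff hl0 hα1 _ _).1 (hbounds ω).2, hξ⟩
  · rintro ⟨q, hq0, hq1, hq2, rfl⟩
    exact ⟨fun ω => (mul_nonneg (sub_nonneg.2 hl1) (hf0 ω)).trans ((le_mix_iff hl0 _ _).2 (hq0 ω)),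
      (sum_mix_eq_one_iff hl0.ne' hf1).2 hq1,
      fun ω => ⟨(le_mix_iff hl0 _ _).2 (hq0 ω), (mix_le_soft_robust_iff hl0 hα1 _ _).2 (hq2 ω)⟩⟩

/-- The soft-robust ambiguity set `Ξ` equals the Minkowski combination
`λ·Q_CVaR + (1−λ)·{f}` of the CVaR dual set and the singleton `{f}`. -/
theorem stmt_7 {Ω : Type*} [Fintype Ω] [Nonempty Ω] (f : Ω → ℝ)
    (hf0 : ∀ ω, 0 ≤ f ω) (hf1 : ∑ ω, f ω = 1)
    (α lam : ℝ) (hα0 : 0 ≤ α) (hα1 : α < 1) (hl0 : 0 < lam) (hl1 : lam ≤ 1) :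
    {ξ : Ω → ℝ | (∀ ω, 0 ≤ ξ ω) ∧ (∑ ω, ξ ω = 1) ∧
        (∀ ω, (1 - lam) * f ω ≤ ξ ω ∧ ξ ω ≤ ((1 - α + lam * α) / (1 - α)) * f ω)}
    = {ξ : Ω → ℝ | ∃ q : Ω → ℝ, (∀ ω, 0 ≤ q ω) ∧ (∑ ω, q ω = 1) ∧
        (∀ ω, q ω ≤ f ω / (1 - α)) ∧ ξ = fun ω => lam * q ω + (1 - lam) * f ω} :=
  stmt_7_general f hf0 hf1 α lam hα1 hl0 hl1
end

section
/- Let P₁,…,P_N ∈ ℝ^{S×S} be stochastic matrices, γ ∈ [0,1), p₀ ∈ Δ^S, and define occupancy frequencies h_i = (I − γP_iᵀ)^{-1} p₀. For β ∈ Δ^N let P_β = Σ_i β_i P_i, h_β = (I − γP_βᵀ)^{-1} p₀, and e_β = Σ_i β_i h_i. If ‖h_i − h_j‖₁ ≤ ε for all i,j, then ‖h_β − e_β‖₁ ≤ γε/(1−γ). -/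
open Matrix

private lemma l1_contract {S : Type*} [Fintype S] (M : Matrix S S ℝ)
    (h0 : ∀ s s', 0 ≤ M s s') (h1 : ∀ s, ∑ s', M s s' = 1) (x : S → ℝ) :
    ∑ s, |Mᵀ.mulVec x s| ≤ ∑ s, |x s| := by
  have key : ∀ s, |Mᵀ.mulVec x s| ≤ ∑ s', M s' s * |x s'| := by
    intro s
    calc |Mᵀ.mulVec x s| = |∑ s', M s' s * x s'| := by
          simp [Matrix.mulVec, dotProduct, Matrix.transpose_apply]
    _ ≤ ∑ s', |M s' s * x s'| := Finset.abs_sum_le_sum_abs _ _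
    _ = ∑ s', M s' s * |x s'| := by
          refine Finset.sum_congr rfl fun s' _ => ?_
          rw [abs_mul, abs_of_nonneg (h0 s' s)]
  calc ∑ s, |Mᵀ.mulVec x s| ≤ ∑ s, ∑ s', M s' s * |x s'| :=
        Finset.sum_le_sum fun s _ => key s
  _ = ∑ s', (∑ s, M s' s) * |x s'| := by
        rw [Finset.sum_comm]
        simp [Finset.sum_mul]
  _ = ∑ s', |x s'| := by simp [h1]

private lemma sum_smul_mulVec {S : Type*} [Fintype S] {N : ℕ} (β : Fin N → ℝ)
    (M : Fin N → Matrix S S ℝ) (v : S → ℝ) :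
    (∑ i, β i • M i).mulVec v = ∑ i, β i • (M i).mulVec v := by
  ext s
  simp only [Matrix.mulVec, dotProduct, Finset.sum_apply, Matrix.sum_apply, Pi.smul_apply,
    Matrix.smul_apply, smul_eq_mul, Finset.sum_mul, Finset.mul_sum]
  rw [Finset.sum_comm]
  simp [mul_assoc]

private lemma fixed_point {S : Type*} [Fintype S] [DecidableEq S]
    (M : Matrix S S ℝ) (h0 : ∀ s s', 0 ≤ M s s') (h1 : ∀ s, ∑ s', M s s' = 1)
    {γ : ℝ} (hγ0 : 0 ≤ γ) (hγ1 : γ < 1) (p0 v : S → ℝ)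
    (hv : v = ((1 - γ • Mᵀ)⁻¹).mulVec p0) : v = p0 + γ • Mᵀ.mulVec v := by
  have hU : IsUnit (1 - γ • Mᵀ) := by
    rw [← Matrix.mulVec_injective_iff_isUnit]
    intro x y hxy
    have hz : (1 - γ • Mᵀ).mulVec (x - y) = 0 := by
      rw [Matrix.mulVec_sub, hxy, sub_self]
    set z : S → ℝ := x - y with hzdef
    have hz2 : z = γ • Mᵀ.mulVec z := by
      rw [Matrix.sub_mulVec, Matrix.one_mulVec, Matrix.smul_mulVec, sub_eq_zero] at hz
      exact hz
    have hbound : ∑ s, |z s| ≤ γ * ∑ s, |z s| := by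
      conv_lhs => rw [hz2]
      calc ∑ s, |(γ • Mᵀ.mulVec z) s| = γ * ∑ s, |Mᵀ.mulVec z s| := by
            simp [abs_mul, abs_of_nonneg hγ0, Finset.mul_sum]
      _ ≤ γ * ∑ s, |z s| :=
            mul_le_mul_of_nonneg_left (l1_contract M h0 h1 z) hγ0
    have hnn : 0 ≤ ∑ s, |z s| := Finset.sum_nonneg fun s _ => abs_nonneg _
    have hzero : ∑ s, |z s| = 0 := by nlinarith
    have : ∀ s ∈ Finset.univ, |z s| = 0 :=
      (Finset.sum_eq_zero_iff_of_nonneg fun s _ => abs_nonneg _).mp hzero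
    have hz0 : z = 0 := by
      funext s
      exact abs_eq_zero.mp (this s (Finset.mem_univ s))
    have := sub_eq_zero.mp (hzdef ▸ hz0)
    exact this
  have hdet : IsUnit (1 - γ • Mᵀ).det := (Matrix.isUnit_iff_isUnit_det _).mp hU
  have hmul : (1 - γ • Mᵀ) * (1 - γ • Mᵀ)⁻¹ = 1 := Matrix.mul_nonsing_inv _ hdet
  have hv2 : (1 - γ • Mᵀ).mulVec v = p0 := by
    rw [hv, Matrix.mulVec_mulVec, hmul, Matrix.one_mulVec]
  rw [Matrix.sub_mulVec, Matrix.one_mulVec, Matrix.smul_mulVec] at hv2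
  rw [← hv2]
  abel

/-- The occupancy frequency of a convex combination of transition matrices is
ℓ1-close to the convex combination of the individual occupancy frequencies:
if `‖h_i − h_j‖₁ ≤ ε` for all `i, j`, then `‖h_β − e_β‖₁ ≤ γε/(1−γ)`. -/
theorem stmt_9 {S : Type*} [Fintype S] [DecidableEq S] {N : ℕ}
    (P : Fin N → Matrix S S ℝ)
    (hP : ∀ i, (∀ s s', 0 ≤ P i s s') ∧ ∀ s, ∑ s', P i s s' = 1)
    (γ : ℝ) (hγ0 : 0 ≤ γ) (hγ1 : γ < 1)
    (p0 : S → ℝ) (hp00 : ∀ s, 0 ≤ p0 s) (hp01 : ∑ s, p0 s = 1)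
    (β : Fin N → ℝ) (hβ0 : ∀ i, 0 ≤ β i) (hβ1 : ∑ i, β i = 1)
    (h : Fin N → S → ℝ) (hdef : ∀ i, h i = ((1 - γ • (P i)ᵀ)⁻¹).mulVec p0)
    (ε : ℝ) (hε : ∀ i j, ∑ s, |h i s - h j s| ≤ ε)
    (Pβ : Matrix S S ℝ) (hPβ : Pβ = ∑ i, β i • P i)
    (hβvec eβ : S → ℝ)
    (hhβ : hβvec = ((1 - γ • Pβᵀ)⁻¹).mulVec p0)
    (heβ : eβ = ∑ i, β i • h i) :
    ∑ s, |hβvec s - eβ s| ≤ γ * ε / (1 - γ) := by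
  classical
  have hPβ0 : ∀ s s', 0 ≤ Pβ s s' := by
    intro s s'
    rw [hPβ]
    simp only [Matrix.sum_apply, Matrix.smul_apply, smul_eq_mul]
    exact Finset.sum_nonneg fun i _ => mul_nonneg (hβ0 i) ((hP i).1 s s')
  have hPβ1 : ∀ s, ∑ s', Pβ s s' = 1 := by
    intro s
    rw [hPβ]
    simp only [Matrix.sum_apply, Matrix.smul_apply, smul_eq_mul]
    rw [Finset.sum_comm]
    calc ∑ i, ∑ s', β i * P i s s' = ∑ i, β i := by
          refine Finset.sum_congr rfl fun i _ => ?_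
          rw [← Finset.mul_sum, (hP i).2 s, mul_one]
    _ = 1 := hβ1
  have Hi : ∀ i, h i = p0 + γ • (P i)ᵀ.mulVec (h i) := fun i =>
    fixed_point (P i) (hP i).1 (hP i).2 hγ0 hγ1 p0 (h i) (hdef i)
  have Hβ : hβvec = p0 + γ • Pβᵀ.mulVec hβvec :=
    fixed_point Pβ hPβ0 hPβ1 hγ0 hγ1 p0 hβvec hhβ
  have He : eβ = p0 + γ • ∑ i, β i • (P i)ᵀ.mulVec (h i) := by
    rw [heβ]
    calc ∑ i, β i • h i = ∑ i, (β i • p0 + γ • (β i • (P i)ᵀ.mulVec (h i))) := by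
          refine Finset.sum_congr rfl fun i _ => ?_
          conv_lhs => rw [Hi i]
          rw [smul_add, smul_comm]
    _ = (∑ i, β i • p0) + γ • ∑ i, β i • (P i)ᵀ.mulVec (h i) := by
          rw [Finset.sum_add_distrib, Finset.smul_sum]
    _ = p0 + γ • ∑ i, β i • (P i)ᵀ.mulVec (h i) := by
          rw [← Finset.sum_smul, hβ1, one_smul]
  have hPβT : Pβᵀ = ∑ i, β i • (P i)ᵀ := by
    rw [hPβ, Matrix.transpose_sum]
    exact Finset.sum_congr rfl fun i _ => Matrix.transpose_smul _ _
  have hsummul : ∀ v : S → ℝ, Pβᵀ.mulVec v = ∑ i, β i • (P i)ᵀ.mulVec v := by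
    intro v
    rw [hPβT]
    exact sum_smul_mulVec β (fun i => (P i)ᵀ) v
  set w : S → ℝ := ∑ i, β i • (P i)ᵀ.mulVec (eβ - h i) with hw
  have hd : hβvec - eβ = γ • Pβᵀ.mulVec (hβvec - eβ) + γ • w := by
    have e2 : w = Pβᵀ.mulVec eβ - ∑ i, β i • (P i)ᵀ.mulVec (h i) := by
      rw [hw]
      calc ∑ i, β i • (P i)ᵀ.mulVec (eβ - h i)
          = ∑ i, (β i • (P i)ᵀ.mulVec eβ - β i • (P i)ᵀ.mulVec (h i)) := by
            refine Finset.sum_congr rfl fun i _ => ?_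
            rw [Matrix.mulVec_sub, smul_sub]
      _ = (∑ i, β i • (P i)ᵀ.mulVec eβ) - ∑ i, β i • (P i)ᵀ.mulVec (h i) :=
            Finset.sum_sub_distrib _ _
      _ = Pβᵀ.mulVec eβ - ∑ i, β i • (P i)ᵀ.mulVec (h i) := by rw [← hsummul eβ]
    rw [Matrix.mulVec_sub, e2, smul_sub, smul_sub]
    conv_lhs => rw [Hβ, He]
    abel
  have hib : ∀ i, ∑ s, |(eβ - h i) s| ≤ ε := by
    intro i
    have hpt : ∀ s, (eβ - h i) s = ∑ j, β j * (h j s - h i s) := by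
      intro s
      simp only [Pi.sub_apply, heβ, Finset.sum_apply, Pi.smul_apply, smul_eq_mul, mul_sub,
        Finset.sum_sub_distrib, ← Finset.sum_mul, hβ1, one_mul]
    calc ∑ s, |(eβ - h i) s| = ∑ s, |∑ j, β j * (h j s - h i s)| := by
          exact Finset.sum_congr rfl fun s _ => by rw [hpt s]
    _ ≤ ∑ s, ∑ j, β j * |h j s - h i s| := by
          refine Finset.sum_le_sum fun s _ => ?_
          calc |∑ j, β j * (h j s - h i s)| ≤ ∑ j, |β j * (h j s - h i s)| :=
                Finset.abs_sum_le_sum_abs _ _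
          _ = ∑ j, β j * |h j s - h i s| := by
                refine Finset.sum_congr rfl fun j _ => ?_
                rw [abs_mul, abs_of_nonneg (hβ0 j)]
    _ = ∑ j, β j * ∑ s, |h j s - h i s| := by
          rw [Finset.sum_comm]
          simp [Finset.mul_sum]
    _ ≤ ∑ j, β j * ε :=
          Finset.sum_le_sum fun j _ => mul_le_mul_of_nonneg_left (hε j i) (hβ0 j)
    _ = ε := by rw [← Finset.sum_mul, hβ1, one_mul]
  have hwb : ∑ s, |w s| ≤ ε := by
    calc ∑ s, |w s| ≤ ∑ s, ∑ i, β i * |(P i)ᵀ.mulVec (eβ - h i) s| := by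
          refine Finset.sum_le_sum fun s _ => ?_
          calc |w s| = |∑ i, β i * (P i)ᵀ.mulVec (eβ - h i) s| := by
                rw [hw]; simp [Finset.sum_apply]
          _ ≤ ∑ i, |β i * (P i)ᵀ.mulVec (eβ - h i) s| := Finset.abs_sum_le_sum_abs _ _
          _ = ∑ i, β i * |(P i)ᵀ.mulVec (eβ - h i) s| := by
                refine Finset.sum_congr rfl fun i _ => ?_
                rw [abs_mul, abs_of_nonneg (hβ0 i)]
    _ = ∑ i, β i * ∑ s, |(P i)ᵀ.mulVec (eβ - h i) s| := by
          rw [Finset.sum_comm]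
          simp [Finset.mul_sum]
    _ ≤ ∑ i, β i * ε := by
          refine Finset.sum_le_sum fun i _ => mul_le_mul_of_nonneg_left ?_ (hβ0 i)
          exact le_trans (l1_contract (P i) (hP i).1 (hP i).2 _) (hib i)
    _ = ε := by rw [← Finset.sum_mul, hβ1, one_mul]
  have hDb : ∑ s, |hβvec s - eβ s| ≤ γ * (∑ s, |hβvec s - eβ s|) + γ * ε := by
    calc ∑ s, |hβvec s - eβ s|
        = ∑ s, |γ * Pβᵀ.mulVec (hβvec - eβ) s + γ * w s| := by
          refine Finset.sum_congr rfl fun s _ => ?_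
          have := congrFun hd s
          simp only [Pi.sub_apply, Pi.add_apply, Pi.smul_apply, smul_eq_mul] at this
          rw [this]
    _ ≤ ∑ s, (γ * |Pβᵀ.mulVec (hβvec - eβ) s| + γ * |w s|) := by
          refine Finset.sum_le_sum fun s _ => ?_
          calc |γ * Pβᵀ.mulVec (hβvec - eβ) s + γ * w s|
              ≤ |γ * Pβᵀ.mulVec (hβvec - eβ) s| + |γ * w s| := abs_add_le _ _
          _ = γ * |Pβᵀ.mulVec (hβvec - eβ) s| + γ * |w s| := by
              rw [abs_mul, abs_mul, abs_of_nonneg hγ0]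
    _ = γ * (∑ s, |Pβᵀ.mulVec (hβvec - eβ) s|) + γ * ∑ s, |w s| := by
          rw [Finset.sum_add_distrib, ← Finset.mul_sum, ← Finset.mul_sum]
    _ ≤ γ * (∑ s, |hβvec s - eβ s|) + γ * ε := by
          refine add_le_add (mul_le_mul_of_nonneg_left ?_ hγ0)
            (mul_le_mul_of_nonneg_left hwb hγ0)
          exact l1_contract Pβ hPβ0 hPβ1 _
  have h1γ : 0 < 1 - γ := by linarith
  rw [le_div_iff₀ h1γ]
  nlinarith [hDb]
end

section
/- With finite S, A, Ω, discount γ ∈ (0,1), rewards bounded by r_max, initial distribution p₀, and a finite family of transition matrices P̂^ω for a fixed policy π with occupancy frequencies h^ω_π = (I − γ(P̂^ω_π)ᵀ)^{-1}p₀: for any compact set Ξ ⊆ Δ^Ω, the static return ρ^S(π) = min_{ξ∈Ξ} Σ_ω ξ_ω ρ(π, P̂^ω) and the dynamic return ρ^D(π) = min_{ξ∈Ξ} ρ(π, Σ_ω ξ_ω P̂^ω) satisfy |ρ^D(π) − ρ^S(π)| ≤ (γ·r_max/(1−γ))·max_{ω₁,ω₂∈Ω} ‖h^{ω₁}_π −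 h^{ω₂}_π‖₁. -/
/-!
For a weight vector `ξ`, the static return is `g ⬝ᵥ r` with `g = ∑ ξ_ω h^ω` the average of the
occupancy frequencies, while the dynamic return is `h̄ ⬝ᵥ r` with `h̄` the occupancy frequency of
the averaged model `P̄ = ∑ ξ_ω P̂^ω`. Since `(I - γ P̂^ωᵀ) h^ω = p₀`, averaging gives
`(I - γ P̄ᵀ) (h̄ - g) = γ ∑ ξ_ω P̂^ωᵀ (g - h^ω)`, whose `ℓ¹` norm is at most `γ ε₁` because
transposed stochastic matrices are `ℓ¹` contractions. The same contraction property gives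
`(1 - γ) ‖x‖₁ ≤ ‖(I - γ P̄ᵀ) x‖₁`, so `‖h̄ - g‖₁ ≤ γ ε₁ / (1 - γ)` and the two returns differ by
at most `γ r_max ε₁ / (1 - γ)` for every `ξ`; this bound passes to the infima over `Ξ`.
-/

open Matrix

section L1
variable {n : Type*} [Fintype n]

lemma sum_abs_sum_smul_le {ι : Type*} [Fintype ι] {c : ι → ℝ} (hc0 : ∀ i, 0 ≤ c i)
    (hc1 : ∑ i, c i = 1) {f : ι → n → ℝ} {ε : ℝ} (hf : ∀ i, ∑ j, |f i j| ≤ ε) :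
    ∑ j, |(∑ i, c i • f i) j| ≤ ε :=
  calc ∑ j, |(∑ i, c i • f i) j| ≤ ∑ j, ∑ i, c i * |f i j| := by
        gcongr with j
        simp only [Finset.sum_apply, Pi.smul_apply, smul_eq_mul]
        refine (Finset.abs_sum_le_sum_abs _ _).trans_eq (Finset.sum_congr rfl fun i _ => ?_)
        rw [abs_mul, abs_of_nonneg (hc0 i)]
    _ = ∑ i, c i * ∑ j, |f i j| := by rw [Finset.sum_comm]; simp only [Finset.mul_sum]
    _ ≤ ∑ i, c i * ε := by gcongr with i; exacts [hc0 i, hf i]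
    _ = ε := by rw [← Finset.sum_mul, hc1, one_mul]

lemma abs_dotProduct_le {x r : n → ℝ} {rmax : ℝ} (hr : ∀ i, |r i| ≤ rmax) :
    |x ⬝ᵥ r| ≤ rmax * ∑ i, |x i| := by
  rw [Finset.mul_sum]
  refine (Finset.abs_sum_le_sum_abs _ _).trans (Finset.sum_le_sum fun i _ => ?_)
  rw [abs_mul, mul_comm]
  exact mul_le_mul_of_nonneg_right (hr i) (abs_nonneg _)

end L1

section Stochastic
variable {n : Type*} [Fintype n] [DecidableEq n] {P : Matrix n n ℝ} {γ : ℝ}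

lemma sum_abs_transpose_mulVec_le (hP : P ∈ rowStochastic ℝ n) (x : n → ℝ) :
    ∑ j, |(Pᵀ *ᵥ x) j| ≤ ∑ i, |x i| :=
  calc ∑ j, |(Pᵀ *ᵥ x) j| = ∑ j, |∑ i, P i j * x i| := by
        simp only [mulVec, dotProduct, transpose_apply]
    _ ≤ ∑ j, ∑ i, P i j * |x i| := by
        gcongr with j
        refine (Finset.abs_sum_le_sum_abs _ _).trans_eq (Finset.sum_congr rfl fun i _ => ?_)
        rw [abs_mul, abs_of_nonneg (nonneg_of_mem_rowStochastic hP)]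
    _ = ∑ i, |x i| := by
        rw [Finset.sum_comm]
        simp only [← Finset.sum_mul, sum_row_of_mem_rowStochastic hP, one_mul]

lemma one_sub_mul_sum_abs_le (hP : P ∈ rowStochastic ℝ n) (hγ : 0 ≤ γ) (x : n → ℝ) :
    (1 - γ) * ∑ i, |x i| ≤ ∑ i, |((1 - γ • Pᵀ) *ᵥ x) i| := by
  have hx : ∀ i, x i = ((1 - γ • Pᵀ) *ᵥ x) i + γ * (Pᵀ *ᵥ x) i := fun i => by
    simp [sub_mulVec, smul_mulVec]
  have : ∑ i, |x i| ≤ ∑ i, |((1 - γ • Pᵀ) *ᵥ x) i| + γ * ∑ i, |(Pᵀ *ᵥ x) i| := by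
    rw [Finset.mul_sum, ← Finset.sum_add_distrib]
    gcongr with i
    calc |x i| = |((1 - γ • Pᵀ) *ᵥ x) i + γ * (Pᵀ *ᵥ x) i| := by rw [← hx i]
      _ ≤ _ := abs_add_le _ _
      _ = _ := by rw [abs_mul, abs_of_nonneg hγ]
  nlinarith [sum_abs_transpose_mulVec_le hP x]

lemma isUnit_det_one_sub_smul_transpose (hP : P ∈ rowStochastic ℝ n) (hγ0 : 0 ≤ γ)
    (hγ1 : γ < 1) : IsUnit (1 - γ • Pᵀ).det := by
  rw [isUnit_iff_ne_zero]
  intro hdet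
  obtain ⟨x, hx0, hx⟩ := exists_mulVec_eq_zero_iff.2 hdet
  have := one_sub_mul_sum_abs_le hP hγ0 x
  simp only [hx, Pi.zero_apply, abs_zero, Finset.sum_const_zero] at this
  have hsum : ∑ i, |x i| = 0 := le_antisymm (nonpos_of_mul_nonpos_right this (by linarith))
    (Finset.sum_nonneg fun i _ => abs_nonneg _)
  exact hx0 (funext fun i => abs_eq_zero.1 <|
    (Finset.sum_eq_zero_iff_of_nonneg fun i _ => abs_nonneg (x i)).1 hsum i (Finset.mem_univ i))

noncomputable def occupancy (γ : ℝ) (P : Matrix n n ℝ) (p : n → ℝ) : n → ℝ :=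
  (1 - γ • Pᵀ)⁻¹ *ᵥ p

lemma one_sub_smul_transpose_mulVec_occupancy (hP : P ∈ rowStochastic ℝ n) (hγ0 : 0 ≤ γ)
    (hγ1 : γ < 1) (p : n → ℝ) : (1 - γ • Pᵀ) *ᵥ occupancy γ P p = p := by
  rw [occupancy, mulVec_mulVec, mul_nonsing_inv _ (isUnit_det_one_sub_smul_transpose hP hγ0 hγ1),
    one_mulVec]

lemma dotProduct_inv_one_sub_smul_mulVec (γ : ℝ) (P : Matrix n n ℝ) (p r : n → ℝ) :
    p ⬝ᵥ ((1 - γ • P)⁻¹ *ᵥ r) = occupancy γ P p ⬝ᵥ r := by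
  rw [dotProduct_mulVec, ← mulVec_transpose, transpose_nonsing_inv, transpose_sub, transpose_one,
    transpose_smul, occupancy]

section Mixture
variable {Ω : Type*} [Fintype Ω] {P : Ω → Matrix n n ℝ} {ξ : Ω → ℝ}

lemma one_sub_smul_transpose_mulVec_sub_average (hξ1 : ∑ ω, ξ ω = 1) {h : Ω → n → ℝ}
    {p q : n → ℝ} (hh : ∀ ω, (1 - γ • (P ω)ᵀ) *ᵥ h ω = p)
    (hq : (1 - γ • (∑ ω, ξ ω • P ω)ᵀ) *ᵥ q = p) :
    (1 - γ • (∑ ω, ξ ω • P ω)ᵀ) *ᵥ (q - ∑ ω, ξ ω • h ω) =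
      γ • ∑ ω, ξ ω • ((P ω)ᵀ *ᵥ (∑ ω', ξ ω' • h ω' - h ω)) := by
  have hp : p = ∑ ω, ξ ω • ((1 - γ • (P ω)ᵀ) *ᵥ h ω) := by
    simp only [hh, ← Finset.sum_smul, hξ1, one_smul]
  rw [mulVec_sub, hq, hp]
  simp only [sub_mulVec, one_mulVec, smul_mulVec, mulVec_sub, smul_sub, Finset.smul_sum,
    Finset.sum_sub_distrib, transpose_sum, transpose_smul, sum_mulVec, smul_smul, mul_comm γ]
  abel

lemma one_sub_mul_sum_abs_occupancy_mixture_sub_le (hP : ∀ ω, P ω ∈ rowStochastic ℝ n)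
    (hγ0 : 0 ≤ γ) (hγ1 : γ < 1) (hξ0 : ∀ ω, 0 ≤ ξ ω) (hξ1 : ∑ ω, ξ ω = 1) {p : n → ℝ} {ε : ℝ}
    (hε : ∀ ω₁ ω₂, ∑ s, |occupancy γ (P ω₁) p s - occupancy γ (P ω₂) p s| ≤ ε) :
    (1 - γ) * ∑ s, |(occupancy γ (∑ ω, ξ ω • P ω) p - ∑ ω, ξ ω • occupancy γ (P ω) p) s| ≤
      γ * ε := by
  set h : Ω → n → ℝ := fun ω => occupancy γ (P ω) p
  have hPbar : ∑ ω, ξ ω • P ω ∈ rowStochastic ℝ n :=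
    convex_rowStochastic.sum_mem (fun ω _ => hξ0 ω) hξ1 fun ω _ => hP ω
  have hdiff : ∀ ω, ∑ s, |(∑ ω', ξ ω' • h ω' - h ω) s| ≤ ε := fun ω => by
    have : ∑ ω', ξ ω' • h ω' - h ω = ∑ ω', ξ ω' • (h ω' - h ω) := by
      simp only [smul_sub, Finset.sum_sub_distrib, ← Finset.sum_smul, hξ1, one_smul]
    rw [this]
    exact sum_abs_sum_smul_le hξ0 hξ1 fun ω' => by simpa using hε ω' ω
  calc (1 - γ) * ∑ s, |(occupancy γ (∑ ω, ξ ω • P ω) p - ∑ ω, ξ ω • h ω) s|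
      ≤ ∑ s, |((1 - γ • (∑ ω, ξ ω • P ω)ᵀ) *ᵥ
          (occupancy γ (∑ ω, ξ ω • P ω) p - ∑ ω, ξ ω • h ω)) s| :=
        one_sub_mul_sum_abs_le hPbar hγ0 _
    _ = γ * ∑ s, |(∑ ω, ξ ω • ((P ω)ᵀ *ᵥ (∑ ω', ξ ω' • h ω' - h ω))) s| := by
        rw [one_sub_smul_transpose_mulVec_sub_average hξ1
          (fun ω => one_sub_smul_transpose_mulVec_occupancy (hP ω) hγ0 hγ1 p)
          (one_sub_smul_transpose_mulVec_occupancy hPbar hγ0 hγ1 p), Finset.mul_sum]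
        simp only [Pi.smul_apply, smul_eq_mul, abs_mul, abs_of_nonneg hγ0]
        rfl
    _ ≤ γ * ε := by
        gcongr
        exact sum_abs_sum_smul_le hξ0 hξ1 fun ω =>
          (sum_abs_transpose_mulVec_le (hP ω) _).trans (hdiff ω)

lemma abs_return_mixture_sub_average_le (hP : ∀ ω, P ω ∈ rowStochastic ℝ n) (hγ0 : 0 ≤ γ)
    (hγ1 : γ < 1) (hξ0 : ∀ ω, 0 ≤ ξ ω) (hξ1 : ∑ ω, ξ ω = 1) {p r : n → ℝ} {rmax ε : ℝ}
    (hr : ∀ s, |r s| ≤ rmax) (hrmax : 0 ≤ rmax)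
    (hε : ∀ ω₁ ω₂, ∑ s, |occupancy γ (P ω₁) p s - occupancy γ (P ω₂) p s| ≤ ε) :
    |p ⬝ᵥ ((1 - γ • ∑ ω, ξ ω • P ω)⁻¹ *ᵥ r) - ∑ ω, ξ ω * p ⬝ᵥ ((1 - γ • P ω)⁻¹ *ᵥ r)| ≤
      γ * rmax / (1 - γ) * ε := by
  have hgap := one_sub_mul_sum_abs_occupancy_mixture_sub_le hP hγ0 hγ1 hξ0 hξ1 hε
  have haverage : ∑ ω, ξ ω * (occupancy γ (P ω) p ⬝ᵥ r) =
      (∑ ω, ξ ω • occupancy γ (P ω) p) ⬝ᵥ r := by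
    simp only [sum_dotProduct, smul_dotProduct, smul_eq_mul]
  simp only [dotProduct_inv_one_sub_smul_mulVec]
  rw [haverage, ← sub_dotProduct]
  calc _ ≤ rmax * ∑ s, |(occupancy γ (∑ ω, ξ ω • P ω) p - ∑ ω, ξ ω • occupancy γ (P ω) p) s| :=
        abs_dotProduct_le hr
    _ ≤ rmax * (γ * ε / (1 - γ)) := by
        gcongr
        rw [le_div_iff₀ (by linarith)]
        linarith
    _ = γ * rmax / (1 - γ) * ε := by ring

end Mixture
end Stochastic

section Infimum
variable {ι : Type*} {s : Set ι} {f g : ι → ℝ} {c : ℝ}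

lemma csInf_image_le_csInf_image_add (hs : s.Nonempty) (hf : BddBelow (f '' s))
    (hfg : ∀ i ∈ s, f i ≤ g i + c) : sInf (f '' s) ≤ sInf (g '' s) + c := by
  rw [← sub_le_iff_le_add]
  exact le_csInf (hs.image g) <| Set.forall_mem_image.2 fun i hi =>
    sub_le_iff_le_add.2 <| (csInf_le hf (Set.mem_image_of_mem f hi)).trans (hfg i hi)

lemma abs_csInf_image_sub_csInf_image_le (hs : s.Nonempty) (hf : BddBelow (f '' s))
    (hfg : ∀ i ∈ s, |g i - f i| ≤ c) : |sInf (g '' s) - sInf (f '' s)| ≤ c := by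
  have hfg' : ∀ i ∈ s, g i ≤ f i + c ∧ f i ≤ g i + c := fun i hi =>
    ⟨sub_le_iff_le_add'.1 (abs_sub_le_iff.1 (hfg i hi)).1,
      sub_le_iff_le_add'.1 (abs_sub_le_iff.1 (hfg i hi)).2⟩
  have hg : BddBelow (g '' s) := by
    obtain ⟨m, hm⟩ := hf
    refine ⟨m - c, Set.forall_mem_image.2 fun i hi => ?_⟩
    linarith [hm (Set.mem_image_of_mem f hi), (hfg' i hi).2]
  rw [abs_sub_le_iff]
  constructor
  · linarith [csInf_image_le_csInf_image_add hs hg fun i hi => (hfg' i hi).1]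
  · linarith [csInf_image_le_csInf_image_add hs hf fun i hi => (hfg' i hi).2]

end Infimum

theorem stmt_12_general {S Ω : Type*} [Fintype S] [DecidableEq S] [Fintype Ω]
    (Phat : Ω → Matrix S S ℝ)
    (hPhat : ∀ ω, (∀ s s', 0 ≤ Phat ω s s') ∧ ∀ s, ∑ s', Phat ω s s' = 1)
    (γ : ℝ) (hγ0 : 0 ≤ γ) (hγ1 : γ < 1)
    (p0 : S → ℝ) (hp01 : ∑ s, p0 s = 1)
    (r : S → ℝ) (rmax : ℝ) (hr : ∀ s, |r s| ≤ rmax)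
    (Ξ : Set (Ω → ℝ)) (hΞne : Ξ.Nonempty) (hΞc : IsCompact Ξ)
    (hΞ : ∀ ξ ∈ Ξ, (∀ ω, 0 ≤ ξ ω) ∧ ∑ ω, ξ ω = 1)
    (h : Ω → S → ℝ) (hdef : ∀ ω, h ω = ((1 - γ • (Phat ω)ᵀ)⁻¹).mulVec p0)
    (ε1 : ℝ) (hε1 : ∀ ω1 ω2, ∑ s, |h ω1 s - h ω2 s| ≤ ε1)
    (ρS ρD : ℝ)
    (hρS : ρS = sInf {v : ℝ | ∃ ξ ∈ Ξ, v =
        ∑ ω, ξ ω * ∑ s, p0 s * ((1 - γ • Phat ω)⁻¹).mulVec r s})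
    (hρD : ρD = sInf {v : ℝ | ∃ ξ ∈ Ξ, v =
        ∑ s, p0 s * ((1 - γ • (∑ ω, ξ ω • Phat ω))⁻¹).mulVec r s}) :
    |ρD - ρS| ≤ γ * rmax / (1 - γ) * ε1 := by
  obtain rfl : h = fun ω => occupancy γ (Phat ω) p0 := funext hdef
  have hP : ∀ ω, Phat ω ∈ rowStochastic ℝ S := fun ω => mem_rowStochastic_iff_sum.2 (hPhat ω)
  have hrmax : 0 ≤ rmax := by
    obtain ⟨s⟩ : Nonempty S := by
      by_contra hS
      simp [not_nonempty_iff.1 hS] at hp01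
    exact (abs_nonneg _).trans (hr s)
  have himage : ∀ F : (Ω → ℝ) → ℝ, {v | ∃ ξ ∈ Ξ, v = F ξ} = F '' Ξ := fun F => by
    ext; simp [eq_comm]
  rw [hρS, hρD, himage, himage]
  refine abs_csInf_image_sub_csInf_image_le hΞne (hΞc.image (by fun_prop)).bddBelow
    fun ξ hξ => ?_
  exact abs_return_mixture_sub_average_le hP hγ0 hγ1 (hΞ ξ hξ).1 (hΞ ξ hξ).2 hr hrmax hε1

/-- Static–dynamic gap bound: for a fixed policy with per-model transition
matrices `P̂^ω`, the static soft-robust return and dynamic soft-robust return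
differ by at most `(γ·r_max/(1−γ)) · max_{ω₁,ω₂} ‖h^{ω₁} − h^{ω₂}‖₁`. -/
theorem stmt_12 {S Ω : Type*} [Fintype S] [DecidableEq S] [Fintype Ω] [Nonempty Ω]
    (Phat : Ω → Matrix S S ℝ)
    (hPhat : ∀ ω, (∀ s s', 0 ≤ Phat ω s s') ∧ ∀ s, ∑ s', Phat ω s s' = 1)
    (γ : ℝ) (hγ0 : 0 ≤ γ) (hγ1 : γ < 1)
    (p0 : S → ℝ) (hp00 : ∀ s, 0 ≤ p0 s) (hp01 : ∑ s, p0 s = 1)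
    (r : S → ℝ) (rmax : ℝ) (hr : ∀ s, |r s| ≤ rmax)
    (Ξ : Set (Ω → ℝ)) (hΞne : Ξ.Nonempty) (hΞc : IsCompact Ξ)
    (hΞ : ∀ ξ ∈ Ξ, (∀ ω, 0 ≤ ξ ω) ∧ ∑ ω, ξ ω = 1)
    (h : Ω → S → ℝ) (hdef : ∀ ω, h ω = ((1 - γ • (Phat ω)ᵀ)⁻¹).mulVec p0)
    (ε1 : ℝ) (hε1 : ∀ ω1 ω2, ∑ s, |h ω1 s - h ω2 s| ≤ ε1)
    (ρS ρD : ℝ)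
    (hρS : ρS = sInf {v : ℝ | ∃ ξ ∈ Ξ, v =
        ∑ ω, ξ ω * ∑ s, p0 s * ((1 - γ • Phat ω)⁻¹).mulVec r s})
    (hρD : ρD = sInf {v : ℝ | ∃ ξ ∈ Ξ, v =
        ∑ s, p0 s * ((1 - γ • (∑ ω, ξ ω • Phat ω))⁻¹).mulVec r s}) :
    |ρD - ρS| ≤ γ * rmax / (1 - γ) * ε1 :=
  stmt_12_general Phat hPhat γ hγ0 hγ1 p0 hp01 r rmax hr Ξ hΞne hΞc hΞ h hdef ε1 hε1 ρS ρD hρS hρD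
end
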